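/- arXiv:1711.02589 — 3 statements merged into one kernel-verified Lean document; each statement's English description precedes it below -/
import Mathlib

section
/- The operator L^γ satisfies the positive maximum principle: for every γ ∈ [0,+∞] and every f ∈ D^γ, if x₀ ∈ ℝ̈ is such that sup_{x ∈ ℝ̈} f(x) = f(x₀) ≥ 0, then L^γ f(x₀) ≤ 0, i.e. f″(x₀) ≤ 0. -/
open MeasureTheory ProbabilityTheory Filter Set
open scoped NNReal ENNReal Topology

noncomputable section

/-- The space `ℝ̈ = (-∞,0⁻] ∪ [0⁺,+∞)`, the disjoint union of two half-lines.
A point is encoded by the half-line it belongs to (`side = true` for the positive one)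
and its distance `rad` to the origin. -/
structure Rddot where
  side : Bool
  rad : ℝ≥0

namespace Rddot

/-- The natural projection `π̈ : ℝ̈ → ℝ` (identifying `0⁺` and `0⁻` with `0`). -/
def val (x : Rddot) : ℝ := if x.side then (x.rad : ℝ) else -(x.rad : ℝ)

/-- An auxiliary `{0,1}`-valued marker of the side, used to define the metric
`d(x,y) = |x - y| + 1_{xy ≤ 0}` on `ℝ̈`. -/
def ind (x : Rddot) : ℝ := if x.side then 0 else 1

/-- `|x|`, the distance of `x ∈ ℝ̈` to the origin. -/
def abs (x : Rddot) : ℝ := (x.rad : ℝ)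

instance : MeasurableSpace Rddot := MeasurableSpace.comap (fun x => (x.side, x.rad)) inferInstance

lemma eq_of_val_ind {x y : Rddot} (hv : x.val = y.val) (hi : x.ind = y.ind) : x = y := by
  rcases x with ⟨bx, rx⟩
  rcases y with ⟨by', ry⟩
  cases bx <;> cases by' <;> simp_all [val, ind]

/-- The metric `d(x,y) = |x-y| + 1_{xy ≤ 0}` on `ℝ̈`: the distance between the real
projections, plus `1` if the two points lie on different half-lines. -/
noncomputable instance : MetricSpace Rddot where
  dist x y := |x.val - y.val| + |x.ind - y.ind|
  dist_self x := by simp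
  dist_comm x y := by simp [abs_sub_comm]
  dist_triangle x y z := by
    show |x.val - z.val| + |x.ind - z.ind| ≤
      (|x.val - y.val| + |x.ind - y.ind|) + (|y.val - z.val| + |y.ind - z.ind|)
    have h1 : |x.val - z.val| ≤ |x.val - y.val| + |y.val - z.val| := abs_sub_le _ _ _
    have h2 : |x.ind - z.ind| ≤ |x.ind - y.ind| + |y.ind - z.ind| := abs_sub_le _ _ _
    linarith
  eq_of_dist_eq_zero := by
    intro x y h
    have h' : |x.val - y.val| + |x.ind - y.ind| = 0 := h
    have h1 : |x.val - y.val| = 0 := by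
      have := abs_nonneg (x.val - y.val)
      have := abs_nonneg (x.ind - y.ind)
      linarith
    have h2 : |x.ind - y.ind| = 0 := by
      have := abs_nonneg (x.val - y.val)
      have := abs_nonneg (x.ind - y.ind)
      linarith
    exact eq_of_val_ind (sub_eq_zero.mp (abs_eq_zero.mp h1))
      (sub_eq_zero.mp (abs_eq_zero.mp h2))

end Rddot

/-- A path indexed by `ℝ≥0` is càdlàg: right-continuous with left limits. -/
def CadlagOn {E : Type*} [TopologicalSpace E] (f : ℝ≥0 → E) : Prop :=
  (∀ t : ℝ≥0, ContinuousWithinAt f (Set.Ici t) t) ∧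
  (∀ t : ℝ≥0, 0 < t → ∃ l : E, Filter.Tendsto f (nhdsWithin t (Set.Iio t)) (nhds l))

/-- The natural filtration of a process `X`: `σ(X_u, u ≤ t)`. -/
def natSigma {Ω E : Type*} [MeasurableSpace E] (X : ℝ≥0 → Ω → E) (t : ℝ≥0) :
    MeasurableSpace Ω :=
  ⨆ u ∈ Set.Iic t, MeasurableSpace.comap (X u) inferInstance

/-- `M` is a martingale with respect to the filtration generated by the process `X`. -/
def IsMartingaleNat {Ω E : Type*} [MeasurableSpace Ω] [MeasurableSpace E] (P : Measure Ω)
    (X : ℝ≥0 → Ω → E) (M : ℝ≥0 → Ω → ℝ) : Prop :=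
  (∀ t, Integrable (M t) P) ∧
  (∀ t, Measurable[natSigma X t] (M t)) ∧
  ∀ s t : ℝ≥0, s ≤ t → P[M t|natSigma X s] =ᵐ[P] M s

/-- `X` is a Markov process (with respect to its natural filtration). -/
def IsMarkovProc {Ω E : Type*} [MeasurableSpace Ω] [MeasurableSpace E] (P : Measure Ω)
    (X : ℝ≥0 → Ω → E) : Prop :=
  ∀ s t : ℝ≥0, s ≤ t → ∀ g : E → ℝ, Measurable g → (∀ x, |g x| ≤ 1) →
    P[(fun ω => g (X t ω))|natSigma X s]
      =ᵐ[P] P[(fun ω => g (X t ω))|MeasurableSpace.comap (X s) inferInstance]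

/-- The domain `𝒟^γ` of the generator of partially reflected Brownian motion with
permeability `γ ∈ [0,∞]`: functions on `ℝ̈` vanishing at infinity, twice continuously
differentiable on each half-line (`pos` and `neg` are the restrictions to `[0⁺,∞)` and
`(-∞,0⁻]`, the latter reparametrized by the distance to the origin), and satisfying the
transmission condition `f'(0⁻) = f'(0⁺) = γ (f(0⁺) - f(0⁻))` (for `γ = ∞` this means
`f'(0⁻) = f'(0⁺)` and `f(0⁺) = f(0⁻)`). -/
structure DomGamma (γ : ℝ≥0∞) where
  pos : ℝ → ℝ
  neg : ℝ → ℝ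
  contDiff_pos : ContDiffOn ℝ 2 pos (Set.Ici 0)
  contDiff_neg : ContDiffOn ℝ 2 neg (Set.Ici 0)
  vanish_pos : Filter.Tendsto pos Filter.atTop (nhds 0)
  vanish_neg : Filter.Tendsto neg Filter.atTop (nhds 0)
  /-- `f'(0⁻) = f'(0⁺)`; note that `f'(0⁻) = - neg'(0)` since `neg` is parametrized by
  the distance to the origin. -/
  deriv_eq : -(derivWithin neg (Set.Ici 0) 0) = derivWithin pos (Set.Ici 0) 0
  /-- `f'(0⁺) = γ (f(0⁺) - f(0⁻))`, and for `γ = ∞`, `f(0⁺) = f(0⁻)`. -/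
  transmission : if γ = ⊤ then pos 0 = neg 0
    else derivWithin pos (Set.Ici 0) 0 = γ.toReal * (pos 0 - neg 0)

namespace DomGamma

variable {γ : ℝ≥0∞}

/-- Evaluation of an element of `𝒟^γ` as a function on `ℝ̈`. -/
def eval (f : DomGamma γ) (x : Rddot) : ℝ := if x.side then f.pos x.abs else f.neg x.abs

/-- The second derivative `f''` of `f ∈ 𝒟^γ` at a point of `ℝ̈` (one-sided at `0⁺`, `0⁻`). -/
def d2 (f : DomGamma γ) (x : Rddot) : ℝ :=
  if x.side then iteratedDerivWithin 2 f.pos (Set.Ici 0) x.abs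
  else iteratedDerivWithin 2 f.neg (Set.Ici 0) x.abs

end DomGamma

/-- The generator `L^γ f = (σ²/2) f''` on `𝒟^γ`. -/
def generator (γ : ℝ≥0∞) (σ2 : ℝ) (f : DomGamma γ) (x : Rddot) : ℝ := σ2 / 2 * f.d2 x

/-- `X` is a solution of the martingale problem associated with `L^γ` (with `σ² = σ2`):
a càdlàg `ℝ̈`-valued Markov process such that for every `f ∈ 𝒟^γ`,
`f(X_t) - ∫₀ᵗ L^γ f(X_s) ds` is a martingale for the filtration generated by `X`. -/
def SolvesMP {Ω : Type*} [MeasurableSpace Ω] (γ : ℝ≥0∞) (σ2 : ℝ) (P : Measure Ω)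
    (X : ℝ≥0 → Ω → Rddot) : Prop :=
  (∀ t, Measurable (X t)) ∧
  (∀ᵐ ω ∂P, CadlagOn fun t => X t ω) ∧
  IsMarkovProc P X ∧
  ∀ f : DomGamma γ, IsMartingaleNat P X
    (fun t ω => f.eval (X t ω) - ∫ s in (0:ℝ)..(t:ℝ), generator γ σ2 f (X s.toNNReal ω))

/-- The law of the path of a process, as a measure on the (Skorokhod) path space. -/
def pathLaw {Ω E : Type*} [MeasurableSpace Ω] [MeasurableSpace E] (P : Measure Ω)
    (X : ℝ≥0 → Ω → E) : Measure (ℝ≥0 → E) := P.map fun ω t => X t ω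

/-- `B` is a Brownian motion started from `x0` with variance parameter `σ2`:
continuous paths and independent, stationary Gaussian increments. -/
def IsBrownianMotion {Ω : Type*} [MeasurableSpace Ω] (P : Measure Ω) (B : ℝ≥0 → Ω → ℝ)
    (x0 : ℝ) (σ2 : ℝ≥0) : Prop :=
  (∀ t, Measurable (B t)) ∧
  (∀ᵐ ω ∂P, B 0 ω = x0) ∧
  (∀ᵐ ω ∂P, Continuous fun t => B t ω) ∧
  (∀ s t : ℝ≥0, s ≤ t →
    P.map (fun ω => B t ω - B s ω) = gaussianReal 0 (σ2 * (t - s))) ∧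
  ∀ (n : ℕ) (τ : Fin (n+1) → ℝ≥0), Monotone τ →
    iIndepFun
      (fun i : Fin n => fun ω => B (τ i.succ) ω - B (τ i.castSucc) ω) P

/-- Time spent by the path `g` strictly above level `c` in absolute value, up to time `u`. -/
def occAbove (c : ℝ) (g : ℝ≥0 → ℝ) (u : ℝ≥0) : ℝ :=
  ∫ s in (0:ℝ)..(u:ℝ), if c < |g s.toNNReal| then (1:ℝ) else 0

/-- Time spent by the path `g` at levels `≤ c` in absolute value, up to time `u`. -/
def occBelow (c : ℝ) (g : ℝ≥0 → ℝ) (u : ℝ≥0) : ℝ :=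
  ∫ s in (0:ℝ)..(u:ℝ), if |g s.toNNReal| ≤ c then (1:ℝ) else 0

/-- The time change `τ(t) = inf{u > 0 : ∫₀ᵘ 1_{|g_s| > c} ds > t}`. -/
def tauTC (c : ℝ) (g : ℝ≥0 → ℝ) (t : ℝ≥0) : ℝ≥0 := sInf {u : ℝ≥0 | (t:ℝ) < occAbove c g u}

/-- The time change `θ(t) = inf{u > 0 : ∫₀ᵘ 1_{|g_s| ≤ c} ds > t}`. -/
def thetaTC (c : ℝ) (g : ℝ≥0 → ℝ) (t : ℝ≥0) : ℝ≥0 := sInf {u : ℝ≥0 | (t:ℝ) < occBelow c g u}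

/-- The gluing map `r : ℝ → ℝ̈`: it maps `[1/(2γ),∞)` to `[0⁺,∞)` and `(-∞,-1/(2γ)]`
to `(-∞,0⁻]` by translation, `[0,1/(2γ))` to `0⁺` and `(-1/(2γ),0)` to `0⁻`. -/
def rmap (γ : ℝ) (z : ℝ) : Rddot :=
  if 0 ≤ z then ⟨true, (z - 1/(2*γ)).toNNReal⟩ else ⟨false, (-z - 1/(2*γ)).toNNReal⟩

/-- The right inverse `r⁻¹(x) = x + sign(x)/(2γ)` of `r`. -/
def rinv (γ : ℝ) (x : Rddot) : ℝ := x.val + (if x.side then 1/(2*γ) else -(1/(2*γ)))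

/-- The "speed and scale" construction: `X_t = r(B_{τ(t)})`. -/
def speedScale {Ω : Type*} (γ : ℝ) (B : ℝ≥0 → Ω → ℝ) (t : ℝ≥0) (ω : Ω) : Rddot :=
  rmap γ (B (tauTC (1/(2*γ)) (fun s => B s ω) t) ω)

/-- The Gaussian kernel `G_t(z) = (2πt)^{-1/2} exp(-z²/(2t))`. -/
def gaussK (t z : ℝ) : ℝ := (Real.sqrt (2 * Real.pi * t))⁻¹ * Real.exp (-(z^2) / (2*t))

/-- `∫₀^∞ e^{-2γl} G_t(a+b+l) dl`. -/
def barrierInt (γ t a b : ℝ) : ℝ :=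
  ∫ l in Set.Ioi (0:ℝ), Real.exp (-(2*γ*l)) * gaussK t (a + b + l)

/-- The transition density of partially reflected Brownian motion with permeability `γ`,
as a function of `t`, `a = |x|`, `b = |y|` and of whether `x` and `y` lie on the same
half-line. -/
def transDens (γ t a b : ℝ) (same : Bool) : ℝ :=
  if same then gaussK t (a - b) + gaussK t (a + b) - 2*γ*barrierInt γ t a b
  else 2*γ*barrierInt γ t a b

/-- `(1/(2ε)) ∫₀ᵗ 1_{|h_s| ≤ ε} ds`, the approximation of the local time at the origin. -/
def localTimeApprox (h : ℝ≥0 → ℝ) (t : ℝ≥0) (ε : ℝ) : ℝ := (1/(2*ε)) * occBelow ε h t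

/-- `L` is the local time at the origin of the path `h`:
`L_t = lim_{ε↓0} (1/(2ε)) ∫₀ᵗ 1_{|h_s| ≤ ε} ds`. -/
def IsLocalTimePath (h : ℝ≥0 → ℝ) (L : ℝ≥0 → ℝ) : Prop :=
  ∀ t : ℝ≥0, Filter.Tendsto (fun ε => localTimeApprox h t ε)
    (nhdsWithin 0 (Set.Ioi 0)) (nhds (L t))

/-- `μ` is the law (on path space) of the absolute value of a Brownian motion with
variance parameter `σ2` started from `a`, i.e. of reflected Brownian motion. -/
def ReflBMLaw (a : ℝ) (σ2 : ℝ≥0) (μ : Measure (ℝ≥0 → ℝ)) : Prop :=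
  ∃ (Ω' : Type) (m' : MeasurableSpace Ω') (P' : @Measure Ω' m') (B' : ℝ≥0 → Ω' → ℝ),
    @IsProbabilityMeasure Ω' m' P' ∧ @IsBrownianMotion Ω' m' P' B' a σ2 ∧
    μ = @Measure.map Ω' (ℝ≥0 → ℝ) m' _ (fun ω t => |B' t ω|) P'

/-- `μ` is the law (on path space) of a Brownian motion with variance parameter `σ2`
started from `a`. -/
def BMLaw (a : ℝ) (σ2 : ℝ≥0) (μ : Measure (ℝ≥0 → ℝ)) : Prop :=
  ∃ (Ω' : Type) (m' : MeasurableSpace Ω') (P' : @Measure Ω' m') (B' : ℝ≥0 → Ω' → ℝ),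
    @IsProbabilityMeasure Ω' m' P' ∧ @IsBrownianMotion Ω' m' P' B' a σ2 ∧
    μ = @Measure.map Ω' (ℝ≥0 → ℝ) m' _ (fun ω t => B' t ω) P'

/-- `W` is a reflected Brownian motion started from `a`: it is distributed as the
absolute value of a standard Brownian motion started from `a`. -/
def IsReflectedBM {Ω : Type*} [MeasurableSpace Ω] (P : Measure Ω) (W : ℝ≥0 → Ω → ℝ)
    (a : ℝ) : Prop :=
  (∀ t, Measurable (W t)) ∧ ReflBMLaw a 1 (P.map fun ω t => W t ω)

/-- `N` is a Poisson process with rate `r`. -/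
def IsPoissonProcess {Ω : Type*} [MeasurableSpace Ω] (P : Measure Ω) (N : ℝ≥0 → Ω → ℕ)
    (r : ℝ≥0) : Prop :=
  (∀ t, Measurable (N t)) ∧
  (∀ᵐ ω ∂P, N 0 ω = 0) ∧
  (∀ᵐ ω ∂P, Monotone fun t => N t ω) ∧
  (∀ s t : ℝ≥0, s ≤ t →
    P.map (fun ω => N t ω - N s ω) = poissonMeasure (r * (t - s))) ∧
  ∀ (n : ℕ) (τ : Fin (n+1) → ℝ≥0), Monotone τ →
    iIndepFun
      (fun i : Fin n => fun ω => N (τ i.succ) ω - N (τ i.castSucc) ω) P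


/-- The Skorokhod distance between `f` and `g` on the time interval `[0,T]`:
the infimum over increasing time changes `λ` of
`max(sup |λ(t) - t|, sup |f(λ(t)) - g(t)|)` (here expressed via a set of admissible `ε`). -/
def dskoT (T : ℝ) (f g : ℝ≥0 → ℝ) : ℝ :=
  sInf {ε : ℝ | 0 ≤ ε ∧ ∃ lam : ℝ → ℝ, StrictMonoOn lam (Set.Icc 0 T) ∧
    ContinuousOn lam (Set.Icc 0 T) ∧ lam 0 = 0 ∧ lam T = T ∧
    ∀ t ∈ Set.Icc 0 T, |lam t - t| ≤ ε ∧ |f (lam t).toNNReal - g t.toNNReal| ≤ ε}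

/-- The metric `d_sko(f,g) = ∫₀^∞ e^{-t} (d_sko^t(f,g) ∧ 1) dt` for Skorokhod
convergence on compact time intervals. -/
def dsko (f g : ℝ≥0 → ℝ) : ℝ :=
  ∫ T in Set.Ioi (0:ℝ), Real.exp (-T) * min (dskoT T f g) 1

/-- A set of paths is (sequentially) compact for the metric `d_sko`. -/
def DSkoSeqCompact (K : Set (ℝ≥0 → ℝ)) : Prop :=
  ∀ u : ℕ → (ℝ≥0 → ℝ), (∀ k, u k ∈ K) →
    ∃ (φ : ℕ → ℕ) (g : ℝ≥0 → ℝ), StrictMono φ ∧ g ∈ K ∧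
      Filter.Tendsto (fun k => dsko (u (φ k)) g) Filter.atTop (nhds 0)

/-- Convergence in distribution, in the Skorokhod space `(D(ℝ₊,ℝ), d_sko)`, of a sequence
of processes (each defined on its own probability space) to a limiting process:
expectations of bounded measurable functionals which are `d_sko`-continuous at càdlàg
paths converge. -/
def ConvDistSkoFam (Ω : ℕ → Type) (mΩ : ∀ n, MeasurableSpace (Ω n))
    (P : ∀ n, @Measure (Ω n) (mΩ n)) (Y : ∀ n, Ω n → (ℝ≥0 → ℝ))
    {Ω' : Type*} [MeasurableSpace Ω'] (P' : Measure Ω') (Y' : Ω' → (ℝ≥0 → ℝ)) : Prop :=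
  ∀ F : (ℝ≥0 → ℝ) → ℝ, Measurable F → (∃ C, ∀ h, |F h| ≤ C) →
    (∀ h, CadlagOn h → ∀ ε : ℝ, 0 < ε → ∃ δ : ℝ, 0 < δ ∧
      ∀ h', CadlagOn h' → dsko h h' < δ → |F h' - F h| < ε) →
    Filter.Tendsto (fun n => ∫ ω, F (Y n ω) ∂(P n)) Filter.atTop
      (nhds (∫ ω, F (Y' ω) ∂P'))

/-- Jump rates of the random walk with an obstacle of width `K`:
nearest-neighbour jumps at rate `m/2`, reduced to `c m/2` on the `K` central edges
(for odd `K` the site `0` is removed and `-1`, `+1` are adjacent). -/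
def rateGen (K : ℕ) (m c : ℝ) (i j : ℤ) : ℝ :=
  if K % 2 = 0 then
    (if (i - j).natAbs = 1 then (if (K : ℤ)/2 < max |i| |j| then m/2 else c*m/2) else 0)
  else
    (if i ≠ 0 ∧ j ≠ 0 ∧ ((i - j).natAbs = 1 ∨ (i = 1 ∧ j = -1) ∨ (i = -1 ∧ j = 1)) then
      (if ((K : ℤ)+1)/2 < max |i| |j| then m/2 else c*m/2) else 0)

/-- The generator of the random walk with an obstacle:
`Qf(i) = Σ_j q(i,j)(f(j) - f(i))`. -/
def QGen (K : ℕ) (m c : ℝ) (f : ℤ → ℝ) (i : ℤ) : ℝ :=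
  rateGen K m c i (i-1) * (f (i-1) - f i) + rateGen K m c i (i+1) * (f (i+1) - f i) +
    (if i = 1 ∨ i = -1 then rateGen K m c i (-i) * (f (-i) - f i) else 0)

/-- A path with values in a discrete space is a right-continuous step function with
left limits. -/
def StepPath {E : Type*} (f : ℝ≥0 → E) : Prop :=
  (∀ t : ℝ≥0, ∃ ε : ℝ≥0, 0 < ε ∧ ∀ s, t ≤ s → s < t + ε → f s = f t) ∧
  (∀ t : ℝ≥0, 0 < t → ∃ ε : ℝ≥0, 0 < ε ∧ ε ≤ t ∧
    ∀ s s', t - ε ≤ s → s < t → t - ε ≤ s' → s' < t → f s = f s')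

/-- `ξ` is the continuous-time random walk with an obstacle of width `K`, migration rate
`m`, barrier permeability parameter `c`, started from `x0`: a right-continuous jump
process on `ℤ` solving the martingale problem for the jump rates `rateGen K m c`. -/
def IsRWGen {Ω : Type*} [MeasurableSpace Ω] (K : ℕ) (m c : ℝ) (x0 : ℤ) (P : Measure Ω)
    (ξ : ℝ≥0 → Ω → ℤ) : Prop :=
  (∀ t, Measurable (ξ t)) ∧
  (∀ᵐ ω ∂P, ξ 0 ω = x0) ∧
  (∀ᵐ ω ∂P, StepPath fun t => ξ t ω) ∧
  (K % 2 = 1 → ∀ᵐ ω ∂P, ∀ t, ξ t ω ≠ 0) ∧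
  ∀ f : ℤ → ℝ, (∃ C, ∀ i, |f i| ≤ C) →
    IsMartingaleNat P ξ
      (fun t ω => f (ξ t ω) - ∫ s in (0:ℝ)..(t:ℝ), QGen K m c f (ξ s.toNNReal ω))

/-- The rescaled random walk `X_n(t) = ξ_n(nt)/√n`, as a real-valued path. -/
def rescaledRW {Ω : Type*} (n : ℕ) (ξ : ℝ≥0 → Ω → ℤ) (ω : Ω) : ℝ≥0 → ℝ :=
  fun t => (ξ ((n : ℝ≥0) * t) ω : ℝ) / Real.sqrt n

/-- The successive crossing times of the origin of a real-valued path: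
`T_0 = 0`, `T_{i+1} = inf{t > T_i : h(T_i) h(t) < 0}`. -/
def crossTimes (h : ℝ≥0 → ℝ) : ℕ → ℝ≥0
  | 0 => 0
  | i+1 => sInf {t : ℝ≥0 | crossTimes h i < t ∧ h (crossTimes h i) * h t < 0}

/-- The successive jump times of a step path, valued in `ℝ≥0∞` (`∞` if there are no
more jumps). -/
def jumpTimes (h : ℝ≥0 → ℝ) : ℕ → ℝ≥0∞
  | 0 => 0
  | k+1 => sInf ((fun s : ℝ≥0 => (s : ℝ≥0∞)) ''
      {s : ℝ≥0 | jumpTimes h k < (s : ℝ≥0∞) ∧ h s ≠ h (jumpTimes h k).toNNReal})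

/-- The martingale part `M(t) = |h(0)| + ∫₀ᵗ 1_{|h(s)| > c} d|h|(s)` of the rescaled
walk: the sum of the increments of `|h|` over jumps happening while `|h| > c`. -/
def martPart (c : ℝ) (h : ℝ≥0 → ℝ) (t : ℝ≥0) : ℝ :=
  |h 0| + ∑' k : ℕ,
    if jumpTimes h (k+1) ≤ (t : ℝ≥0∞) then
      (if c < |h ((jumpTimes h k).toNNReal)| then
        |h ((jumpTimes h (k+1)).toNNReal)| - |h ((jumpTimes h k).toNNReal)| else 0)
    else 0

/-- The occupation time of the barrier `[-c,c]` by the path `h` up to time `t`. -/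
def occBarrier (c : ℝ) (h : ℝ≥0 → ℝ) (t : ℝ≥0) : ℝ := occBelow c h t

/-- `μ` is the law on path space of (the projection to `ℝ` of) partially reflected
Brownian motion with permeability `γ` and diffusion coefficient `σ2` started from `x`. -/
def PRBMLawStart (γ : ℝ≥0∞) (σ2 : ℝ) (x : Rddot) (μ : Measure (ℝ≥0 → ℝ)) : Prop :=
  ∃ (Ω' : Type) (m' : MeasurableSpace Ω') (P' : @Measure Ω' m') (X : ℝ≥0 → Ω' → Rddot),
    @IsProbabilityMeasure Ω' m' P' ∧ @SolvesMP Ω' m' γ σ2 P' X ∧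
    (∀ᵐ ω ∂P', X 0 ω = x) ∧
    (∀ᵐ ω ∂P', Continuous fun t => (X t ω).val) ∧
    μ = @Measure.map Ω' (ℝ≥0 → ℝ) m' _ (fun ω t => (X t ω).val) P'


/-!
At an interior maximum the first derivative vanishes; at `0⁺` (or `0⁻`) the one-sided
derivative is `≤ 0`, and the transmission condition forces it to be `≥ 0`: for `γ < ∞` because
`f(0⁺) - f(0⁻)` has the right sign at a maximum, for `γ = ∞` because `f` is then also maximal
at the other endpoint `0⁻`, where the derivatives agree. With a vanishing first derivative, the
Peano form of Taylor's theorem at order two gives `f'' ≤ 0` at the maximum.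
-/

section SecondDerivativeTest

variable {g : ℝ → ℝ} {s : Set ℝ} {a : ℝ}

theorem IsLocalMaxOn.derivWithin_nonpos (h : IsLocalMaxOn g s a)
    (hs : ∃ᶠ x in 𝓝[>] a, x ∈ s) : derivWithin g s a ≤ 0 := by
  simpa only [fderivWithin_derivWithin] using
    h.fderivWithin_nonpos (one_mem_posTangentConeAt_iff_frequently.2 hs)

theorem IsLocalMaxOn.iteratedDerivWithin_two_nonpos (h : IsLocalMaxOn g s a)
    (hs : Convex ℝ s) (ha : a ∈ s) (hg : ContDiffOn ℝ 2 g s) (hd : derivWithin g s a = 0)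
    (hacc : (𝓝[s \ {a}] a).NeBot) : iteratedDerivWithin 2 g s a ≤ 0 := by
  set c := iteratedDerivWithin 2 g s a
  have htaylor : ∀ x, taylorWithinEval g 2 s a x = g a + c / 2 * (x - a) ^ 2 := by
    intro x
    simp only [taylor_within_apply, Finset.sum_range_succ, Finset.sum_range_zero,
      iteratedDerivWithin_zero, iteratedDerivWithin_one, hd, smul_eq_mul]
    norm_num [Nat.factorial, c]
    ring
  have hlim : Tendsto (fun x ↦ (g x - g a) / (x - a) ^ 2 - c / 2) (𝓝[s \ {a}] a) (𝓝 0) := by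
    refine ((Real.taylor_tendsto hs ha hg).mono_left (nhdsWithin_mono _ sdiff_subset)).congr' ?_
    filter_upwards [self_mem_nhdsWithin] with x hx
    have hxa : (x - a) ^ 2 ≠ 0 := pow_ne_zero _ (sub_ne_zero.2 hx.2)
    rw [htaylor, sub_add_eq_sub_sub, sub_div, mul_div_cancel_right₀ _ hxa]
  have hle : ∀ᶠ x in 𝓝[s \ {a}] a, (g x - g a) / (x - a) ^ 2 - c / 2 ≤ -(c / 2) := by
    filter_upwards [h.filter_mono (nhdsWithin_mono _ sdiff_subset)] with x hx
    have : (g x - g a) / (x - a) ^ 2 ≤ 0 :=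
      div_nonpos_of_nonpos_of_nonneg (sub_nonpos.2 hx) (sq_nonneg _)
    linarith
  linarith [le_of_tendsto hlim hle]

end SecondDerivativeTest

namespace Rddot

def reflect (x : Rddot) : Rddot := ⟨!x.side, x.rad⟩

end Rddot

namespace DomGamma

variable {γ : ℝ≥0∞}

/-- `f ∘ reflect`, which lies in `𝒟^γ` since the transmission condition is symmetric. -/
def swap (f : DomGamma γ) : DomGamma γ where
  pos := f.neg
  neg := f.pos
  contDiff_pos := f.contDiff_neg
  contDiff_neg := f.contDiff_pos
  vanish_pos := f.vanish_neg
  vanish_neg := f.vanish_pos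
  deriv_eq := by linarith [f.deriv_eq]
  transmission := by
    have h := f.transmission
    split_ifs at h ⊢
    · exact h.symm
    · rw [mul_sub] at h ⊢
      linarith [f.deriv_eq]

theorem eval_swap (f : DomGamma γ) (x : Rddot) : f.swap.eval x = f.eval x.reflect := by
  cases x with | mk side rad => cases side <;> rfl

theorem d2_swap (f : DomGamma γ) (x : Rddot) : f.swap.d2 x = f.d2 x.reflect := by
  cases x with | mk side rad => cases side <;> rfl

@[simp]
theorem eval_mk_true (f : DomGamma γ) (r : ℝ≥0) : f.eval ⟨true, r⟩ = f.pos r := rfl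

@[simp]
theorem eval_mk_false (f : DomGamma γ) (r : ℝ≥0) : f.eval ⟨false, r⟩ = f.neg r := rfl

theorem derivWithin_pos_zero_nonneg_of_neg_le (f : DomGamma γ)
    (hneg : ∀ r ∈ Ici (0 : ℝ), f.neg r ≤ f.pos 0) : 0 ≤ derivWithin f.pos (Ici 0) 0 := by
  have h := f.transmission
  split_ifs at h with hγ
  · have hmax : IsMaxOn f.neg (Ici 0) 0 := fun r hr ↦ h ▸ hneg r hr
    have := hmax.localize.derivWithin_nonpos <| Eventually.frequently <|
      eventually_nhdsWithin_of_forall fun x hx ↦ Ioi_subset_Ici_self hx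
    linarith [f.deriv_eq]
  · rw [h]
    exact mul_nonneg ENNReal.toReal_nonneg (sub_nonneg.2 (hneg 0 self_mem_Ici))

theorem d2_mk_true_nonpos_of_forall_le (f : DomGamma γ) (a : ℝ≥0)
    (hmax : ∀ y, f.eval y ≤ f.eval ⟨true, a⟩) : f.d2 ⟨true, a⟩ ≤ 0 := by
  have hpos : IsMaxOn f.pos (Ici 0) a := fun r hr ↦ by
    simpa [Real.coe_toNNReal r hr] using hmax ⟨true, r.toNNReal⟩
  have hneg : ∀ r ∈ Ici (0 : ℝ), f.neg r ≤ f.pos a := fun r hr ↦ by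
    simpa [Real.coe_toNNReal r hr] using hmax ⟨false, r.toNNReal⟩
  have hfreq : ∃ᶠ x in 𝓝[>] (a : ℝ), x ∈ Ici (0 : ℝ) := by
    refine Eventually.frequently (eventually_nhdsWithin_of_forall fun x hx ↦ ?_)
    exact a.coe_nonneg.trans (le_of_lt hx)
  have hd : derivWithin f.pos (Ici 0) a = 0 := by
    rcases a.coe_nonneg.eq_or_lt with ha | ha
    · rw [← ha] at hpos hneg hfreq ⊢
      exact le_antisymm (hpos.localize.derivWithin_nonpos hfreq)
        (f.derivWithin_pos_zero_nonneg_of_neg_le hneg)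
    · rw [derivWithin_of_mem_nhds (Ici_mem_nhds ha)]
      exact (hpos.localize.isLocalMax (Ici_mem_nhds ha)).deriv_eq_zero
  have hacc : (𝓝[Ici 0 \ {(a : ℝ)}] (a : ℝ)).NeBot :=
    (nhdsGT_neBot (a : ℝ)).mono (nhdsWithin_mono _ fun x hx ↦
      ⟨a.coe_nonneg.trans (le_of_lt hx), ne_of_gt hx⟩)
  exact hpos.localize.iteratedDerivWithin_two_nonpos (convex_Ici 0) a.coe_nonneg
    f.contDiff_pos hd hacc

theorem d2_nonpos_of_forall_le (f : DomGamma γ) {x₀ : Rddot}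
    (hmax : ∀ y, f.eval y ≤ f.eval x₀) : f.d2 x₀ ≤ 0 := by
  obtain ⟨_ | _, a⟩ := x₀
  · have hswap := f.swap.d2_mk_true_nonpos_of_forall_le a fun y ↦
      (f.eval_swap y).trans_le (hmax y.reflect)
    rwa [d2_swap] at hswap
  · exact f.d2_mk_true_nonpos_of_forall_le a hmax

end DomGamma

theorem positive_maximum_principle_general (γ : ℝ≥0∞) (σ2 : ℝ) (hσ : 0 < σ2)
    (f : DomGamma γ) (x₀ : Rddot)
    (hmax : ∀ y : Rddot, f.eval y ≤ f.eval x₀) :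
    generator γ σ2 f x₀ ≤ 0 ∧ f.d2 x₀ ≤ 0 := by
  have hd2 := f.d2_nonpos_of_forall_le hmax
  exact ⟨mul_nonpos_of_nonneg_of_nonpos (by positivity) hd2, hd2⟩

/-- The operator `L^γ` satisfies the positive maximum principle: for
every `γ ∈ [0,∞]` and `f ∈ 𝒟^γ`, if `x₀ ∈ ℝ̈` is such that `sup f = f(x₀) ≥ 0`, then
`L^γ f(x₀) ≤ 0`, i.e. `f''(x₀) ≤ 0`. -/
theorem positive_maximum_principle (γ : ℝ≥0∞) (σ2 : ℝ) (hσ : 0 < σ2)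
    (f : DomGamma γ) (x₀ : Rddot)
    (hmax : ∀ y : Rddot, f.eval y ≤ f.eval x₀) (hpos : 0 ≤ f.eval x₀) :
    generator γ σ2 f x₀ ≤ 0 ∧ f.d2 x₀ ≤ 0 :=
  positive_maximum_principle_general γ σ2 hσ f x₀ hmax

end
end

section
/- For every γ ∈ (0,∞), t > 0 and x ∈ ℝ̈, the function g_t(x,·) is a probability density on ℝ̈: g_t(x,y) ≥ 0 for all y, and ∫₀^∞ [G_t(x−y) + G_t(x+y) − 2γ ∫₀^∞ e^{−2γl} G_t(|x|+y+l) dl] dy + ∫₀^∞ 2γ ∫₀^∞ e^{−2γl} G_t(|x|+y+l) dl dy = 1. -/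
open MeasureTheory ProbabilityTheory Filter Set
open scoped NNReal ENNReal Topology

noncomputable section

/-!
On the same half-line `g_t(x,·)` is the reflected kernel `G_t(|x|-·) + G_t(|x|+·)` minus a
barrier term, and that barrier term is exactly the density on the opposite half-line. So the
barrier terms cancel in the total mass, and unfolding the reflected kernel leaves
`∫_ℝ G_t = 1`. Nonnegativity holds because `G_t` decreases in `|z|` and `2γ e^{-2γl} dl` is a
probability measure on `(0,∞)`, so the barrier term is at most `G_t(|x|+|y|)`.
-/

theorem integral_Ioi_add_integral_Ioi_comp_neg {E : Type*} [NormedAddCommGroup E]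
    [NormedSpace ℝ E] {f : ℝ → E} (hf : Integrable f) :
    (∫ x in Ioi 0, f x) + ∫ x in Ioi 0, f (-x) = ∫ x, f x := by
  rw [integral_comp_neg_Ioi, neg_zero, add_comm]
  exact intervalIntegral.integral_Iic_add_Ioi hf.integrableOn hf.integrableOn

section TransitionDensity

variable {γ t a b : ℝ}

theorem gaussK_eq_gaussianPDFReal (ht : 0 ≤ t) : gaussK t = gaussianPDFReal 0 ⟨t, ht⟩ := by
  ext z
  simp only [gaussK, gaussianPDFReal, sub_zero]
  rfl

theorem gaussK_nonneg (t z : ℝ) : 0 ≤ gaussK t z := by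
  unfold gaussK
  positivity

theorem integrable_gaussK (ht : 0 ≤ t) : Integrable (gaussK t) := by
  rw [gaussK_eq_gaussianPDFReal ht]
  exact integrable_gaussianPDFReal 0 _

theorem integral_gaussK (ht : 0 < t) : ∫ z, gaussK t z = 1 := by
  rw [gaussK_eq_gaussianPDFReal ht.le]
  exact integral_gaussianPDFReal_eq_one 0 fun h => ht.ne' (congrArg NNReal.toReal h)

theorem gaussK_le_gaussK (ht : 0 ≤ t) {u v : ℝ} (hu : 0 ≤ u) (huv : u ≤ v) :
    gaussK t v ≤ gaussK t u := by
  unfold gaussK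
  gcongr

theorem integral_gaussK_sub_add_integral_gaussK_add (ht : 0 < t) (a : ℝ) :
    (∫ y in Ioi 0, gaussK t (a - y)) + ∫ y in Ioi 0, gaussK t (a + y) = 1 := by
  have h := integral_Ioi_add_integral_Ioi_comp_neg ((integrable_gaussK ht.le).comp_add_left a)
  simp only [← sub_eq_add_neg] at h
  rw [add_comm, h, integral_add_left_eq_self, integral_gaussK ht]

theorem integral_exp_neg_two_mul_Ioi (hγ : 0 < γ) :
    ∫ l in Ioi (0 : ℝ), Real.exp (-(2 * γ * l)) = (2 * γ)⁻¹ := by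
  simp_rw [← neg_mul]
  rw [integral_exp_mul_Ioi (by linarith) 0]
  simp

theorem barrierInt_nonneg (γ t a b : ℝ) : 0 ≤ barrierInt γ t a b :=
  setIntegral_nonneg measurableSet_Ioi fun _ _ => mul_nonneg (Real.exp_pos _).le (gaussK_nonneg _ _)

theorem integrableOn_exp_mul_gaussK (hγ : 0 ≤ γ) (ht : 0 ≤ t) (c : ℝ) :
    IntegrableOn (fun l => Real.exp (-(2 * γ * l)) * gaussK t (c + l)) (Ioi 0) := by
  refine ((integrable_gaussK ht).comp_add_left c).integrableOn.mono'
    (by unfold gaussK; fun_prop) ?_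
  filter_upwards [ae_restrict_mem measurableSet_Ioi] with l hl
  rw [Real.norm_of_nonneg (mul_nonneg (Real.exp_pos _).le (gaussK_nonneg _ _))]
  have hexp : Real.exp (-(2 * γ * l)) ≤ 1 :=
    Real.exp_le_one_iff.mpr (by nlinarith [mem_Ioi.mp hl])
  exact mul_le_of_le_one_left (gaussK_nonneg _ _) hexp

theorem two_mul_barrierInt_le (hγ : 0 < γ) (ht : 0 ≤ t) (hab : 0 ≤ a + b) :
    2 * γ * barrierInt γ t a b ≤ gaussK t (a + b) := by
  have hexp : IntegrableOn (fun l => Real.exp (-(2 * γ * l))) (Ioi 0) := by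
    simpa only [neg_mul] using exp_neg_integrableOn_Ioi 0 (by positivity : 0 < 2 * γ)
  have hle :
      barrierInt γ t a b ≤ ∫ l in Ioi (0 : ℝ), Real.exp (-(2 * γ * l)) * gaussK t (a + b) :=
    setIntegral_mono_on (integrableOn_exp_mul_gaussK hγ.le ht _) (hexp.mul_const _)
      measurableSet_Ioi fun l hl => mul_le_mul_of_nonneg_left
        (gaussK_le_gaussK ht hab (le_add_of_nonneg_right (mem_Ioi.mp hl).le)) (Real.exp_pos _).le
  calc 2 * γ * barrierInt γ t a b
      ≤ 2 * γ * ∫ l in Ioi (0 : ℝ), Real.exp (-(2 * γ * l)) * gaussK t (a + b) := by gcongr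
    _ = gaussK t (a + b) := by
      rw [integral_mul_const, integral_exp_neg_two_mul_Ioi hγ, ← mul_assoc,
        mul_inv_cancel₀ (by positivity), one_mul]

theorem integrableOn_two_mul_barrierInt (hγ : 0 < γ) (ht : 0 ≤ t) (ha : 0 ≤ a) :
    IntegrableOn (fun b => 2 * γ * barrierInt γ t a b) (Ioi 0) := by
  have hmeas : StronglyMeasurable fun b => barrierInt γ t a b := by
    refine StronglyMeasurable.integral_prod_right' (ν := volume.restrict (Ioi 0))
      (f := fun p : ℝ × ℝ => Real.exp (-(2 * γ * p.2)) * gaussK t (a + p.1 + p.2)) ?_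
    exact Continuous.stronglyMeasurable (by unfold gaussK; fun_prop)
  refine ((integrable_gaussK ht).comp_add_left a).integrableOn.mono'
    (hmeas.const_mul _).aestronglyMeasurable ?_
  filter_upwards [ae_restrict_mem measurableSet_Ioi] with b hb
  rw [Real.norm_of_nonneg (mul_nonneg (by positivity) (barrierInt_nonneg γ t a b))]
  exact two_mul_barrierInt_le hγ ht (add_nonneg ha (mem_Ioi.mp hb).le)

theorem transDens_nonneg (hγ : 0 < γ) (ht : 0 ≤ t) (ha : 0 ≤ a) (hb : 0 ≤ b) (same : Bool) :
    0 ≤ transDens γ t a b same := by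
  cases same
  · exact mul_nonneg (by positivity) (barrierInt_nonneg γ t a b)
  · have hbarrier := two_mul_barrierInt_le hγ ht (add_nonneg ha hb)
    have hgauss := gaussK_nonneg t (a - b)
    simp only [transDens, if_true]
    linarith

theorem integral_transDens_true_add_integral_transDens_false (hγ : 0 < γ) (ht : 0 < t)
    (ha : 0 ≤ a) :
    (∫ b in Ioi 0, transDens γ t a b true) + ∫ b in Ioi 0, transDens γ t a b false = 1 := by
  have hsub := (integrable_gaussK ht.le).comp_sub_left a |>.integrableOn (s := Ioi 0)
  have hadd := (integrable_gaussK ht.le).comp_add_left a |>.integrableOn (s := Ioi 0)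
  simp only [transDens, if_true, Bool.false_eq_true, if_false]
  have hsum : IntegrableOn (fun b => gaussK t (a - b) + gaussK t (a + b)) (Ioi 0) :=
    hsub.add hadd
  rw [integral_sub hsum (integrableOn_two_mul_barrierInt hγ ht.le ha), sub_add_cancel,
    integral_add hsub hadd, integral_gaussK_sub_add_integral_gaussK_add ht]

end TransitionDensity

/-- For every `γ ∈ (0,∞)`, `t > 0` and `x ∈ ℝ̈`, the function
`g_t(x,·)` is a probability density on `ℝ̈`: it is nonnegative, and
`∫₀^∞ [G_t(x-y) + G_t(x+y) - 2γ∫₀^∞ e^{-2γl}G_t(|x|+y+l)dl] dy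
+ ∫₀^∞ 2γ∫₀^∞ e^{-2γl}G_t(|x|+y+l)dl dy = 1`. -/
theorem transition_density_is_probability_density (γ : ℝ) (hγ : 0 < γ) (t : ℝ) (ht : 0 < t)
    (x : Rddot) :
    (∀ y : Rddot, 0 ≤ transDens γ t x.abs y.abs (y.side == x.side)) ∧
    (∫ yv in Set.Ioi (0:ℝ), transDens γ t x.abs yv true) +
      (∫ yv in Set.Ioi (0:ℝ), transDens γ t x.abs yv false) = 1 :=
  ⟨fun y => transDens_nonneg hγ ht.le x.rad.coe_nonneg y.rad.coe_nonneg _,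
    integral_transDens_true_add_integral_transDens_false hγ ht x.rad.coe_nonneg⟩

end
end

section
/- (Skorokhod's lemma.) Let f : ℝ₊ → ℝ be continuous with f(0) ≥ 0. There exists a unique continuous function l : ℝ₊ → ℝ such that (i) X(t) := l(t) + f(t) ≥ 0 for all t ≥ 0; (ii) l(0) = 0 and l is non-decreasing; (iii) ∫₀^∞ 1_{X(t) > 0} dl(t) = 0 (l increases only when X = 0). Moreover this l is given explicitly by l(t) = sup_{0≤s≤t} (f(s))⁻, where z⁻ = max(−z, 0). -/
open MeasureTheory ProbabilityTheory Filter Set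
open scoped NNReal ENNReal Topology

noncomputable section

/-- A function `l` solves the Skorokhod problem for `f` (on `ℝ₊`, with everything
extended by `0` to negative times): `l` is continuous, non-decreasing, vanishes at `0`,
`X(t) = l(t) + f(t) ≥ 0` for `t ≥ 0`, and the Stieltjes measure `dl` does not charge
`{X > 0}`. -/
def SkorokhodSol (f l : ℝ → ℝ) : Prop :=
  ∃ (hm : Monotone l) (hc : Continuous l),
    (∀ t : ℝ, t ≤ 0 → l t = 0) ∧
    (∀ t : ℝ, 0 ≤ t → 0 ≤ l t + f t) ∧
    ({ toFun := l, mono' := hm,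
       right_continuous' := fun _ => hc.continuousAt.continuousWithinAt
       : StieltjesFunction ℝ }).measure {t : ℝ | 0 ≤ t ∧ 0 < l t + f t} = 0


/-! Any solution `l` dominates `L(t) = sup_{0 ≤ s ≤ t} (f s)⁻`, since `l ≥ -f` and `l` is
non-decreasing and non-negative. If `l(t) > L(t)`, then on the last stretch `(u, t]` on which
`l > L(t)` we have `X > 0`, so `dl` does not charge it and `l(t) = l(u) ≤ L(t)`.

Conversely, `L` is continuous, being `t ↦ sup_{0 ≤ s ≤ 1} (f (s t))⁻`, a supremum over a
fixed compact set. Near a point where `L + f > 0` we have `-f < L`, so the running supremum does not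
grow there: `L` is locally constant on `{X > 0}` and `dL` does not charge it. -/

theorem StieltjesFunction.le_of_measure_gt_eq_zero (F : StieltjesFunction ℝ)
    (hF : Continuous F) {a t c : ℝ} (hat : a ≤ t) (hac : F a ≤ c)
    (hμ : F.measure (Ioc a t ∩ {s | c < F s}) = 0) : F t ≤ c := by
  set A := Icc a t ∩ F ⁻¹' Iic c
  have hA : A.Nonempty := ⟨a, ⟨le_rfl, hat⟩, hac⟩
  have hAbdd : BddAbove A := bddAbove_Icc.mono inter_subset_left
  have huA : sSup A ∈ A :=
    (isClosed_Icc.inter (isClosed_Iic.preimage hF)).csSup_mem hA hAbdd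
  have hgt : Ioc (sSup A) t ⊆ Ioc a t ∩ {s | c < F s} := by
    intro s ⟨hus, hst⟩
    refine ⟨⟨huA.1.1.trans_lt hus, hst⟩, (lt_of_not_ge fun hsc => ?_ : c < F s)⟩
    exact hus.not_ge (le_csSup hAbdd ⟨⟨huA.1.1.trans hus.le, hst⟩, hsc⟩)
  have hFu : F t - F (sSup A) ≤ 0 := by
    rw [← ENNReal.ofReal_eq_zero, ← F.measure_Ioc]
    exact measure_mono_null hgt hμ
  have hFuc : F (sSup A) ≤ c := huA.2
  linarith

/-- For `t < 0` the supremum is over the empty set and is `0` by the convention on `ℝ`. -/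
def skorokhodRegulator (f : ℝ → ℝ) (t : ℝ) : ℝ := ⨆ s : Icc (0:ℝ) t, max (-(f s)) 0

section

variable {f : ℝ → ℝ}

theorem skorokhodRegulator_nonneg (t : ℝ) : 0 ≤ skorokhodRegulator f t :=
  Real.iSup_nonneg fun _ => le_max_right _ _

theorem skorokhodRegulator_of_nonpos (hf0 : 0 ≤ f 0) {t : ℝ} (ht : t ≤ 0) :
    skorokhodRegulator f t = 0 := by
  refine le_antisymm (Real.iSup_nonpos fun s => ?_) (skorokhodRegulator_nonneg t)
  rw [le_antisymm (s.2.2.trans ht) s.2.1]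
  exact max_le (neg_nonpos.2 hf0) le_rfl

theorem bddAbove_range_negPart_Icc (hf : ContinuousOn f (Ici 0)) (t : ℝ) :
    BddAbove (range fun s : Icc (0:ℝ) t => max (-(f s)) 0) := by
  rw [← image_eq_range (fun s => max (-(f s)) 0)]
  have hg : ContinuousOn (fun s => max (-(f s)) 0) (Ici 0) := by fun_prop
  exact isCompact_Icc.bddAbove_image (hg.mono fun s hs => hs.1)

theorem negPart_le_skorokhodRegulator (hf : ContinuousOn f (Ici 0)) {s t : ℝ} (hs : 0 ≤ s)
    (hst : s ≤ t) : max (-(f s)) 0 ≤ skorokhodRegulator f t :=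
  le_ciSup (f := fun s : Icc (0:ℝ) t => max (-(f s)) 0) (bddAbove_range_negPart_Icc hf t)
    ⟨s, hs, hst⟩

theorem skorokhodRegulator_le_of_forall_negPart_le (hf : ContinuousOn f (Ici 0)) {a b : ℝ}
    (h : ∀ s, 0 ≤ s → a < s → s ≤ b → max (-(f s)) 0 ≤ skorokhodRegulator f a) :
    skorokhodRegulator f b ≤ skorokhodRegulator f a := by
  refine Real.iSup_le (fun s => ?_) (skorokhodRegulator_nonneg a)
  rcases le_or_gt (s : ℝ) a with hsa | has
  · exact negPart_le_skorokhodRegulator hf s.2.1 hsa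
  · exact h s s.2.1 has s.2.2

theorem monotone_skorokhodRegulator (hf : ContinuousOn f (Ici 0)) :
    Monotone (skorokhodRegulator f) := fun _ _ hab =>
  Real.iSup_le (fun s => negPart_le_skorokhodRegulator hf s.2.1 (s.2.2.trans hab))
    (skorokhodRegulator_nonneg _)

theorem skorokhodRegulator_eq_sSup_image (hf0 : 0 ≤ f 0) (t : ℝ) :
    skorokhodRegulator f t = sSup ((fun s => max (-(f (max (s * t) 0))) 0) '' Icc 0 1) := by
  rcases le_or_gt 0 t with ht | ht
  · rw [image_congr fun s hs => by rw [max_eq_left (mul_nonneg hs.1 ht)],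
      ← image_image (fun s => max (-(f s)) 0) (· * t), image_mul_right_Icc zero_le_one ht,
      zero_mul, one_mul, sSup_image']
    rfl
  · have hzero : ∀ s ∈ Icc (0:ℝ) 1, max (-(f (max (s * t) 0))) 0 = 0 := fun s hs => by
      rw [max_eq_right (mul_nonpos_of_nonneg_of_nonpos hs.1 ht.le)]
      exact max_eq_right (neg_nonpos.2 hf0)
    rw [image_congr hzero, (nonempty_Icc.2 zero_le_one).image_const, csSup_singleton,
      skorokhodRegulator_of_nonpos hf0 ht.le]

theorem continuous_skorokhodRegulator (hf : ContinuousOn f (Ici 0)) (hf0 : 0 ≤ f 0) :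
    Continuous (skorokhodRegulator f) := by
  rw [funext (skorokhodRegulator_eq_sSup_image hf0)]
  refine isCompact_Icc.continuous_sSup (f := fun t s => max (-(f (max (s * t) 0))) 0) ?_
  exact ((hf.comp_continuous (by fun_prop) fun _ => mem_Ici.2 (le_max_right _ _)).neg).max
    continuous_const

theorem exists_mem_Ioo_skorokhodRegulator_eq (hf : ContinuousOn f (Ici 0)) (hf0 : 0 ≤ f 0)
    {t : ℝ} (ht : 0 ≤ t) (hX : 0 < skorokhodRegulator f t + f t) :
    ∃ a b, t ∈ Ioo a b ∧ skorokhodRegulator f a = skorokhodRegulator f b := by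
  obtain ⟨c, hfc, hcL⟩ : ∃ c, -f t < c ∧ c < skorokhodRegulator f t :=
    exists_between (by linarith)
  have hL_near : ∀ᶠ u in 𝓝 t, c < skorokhodRegulator f u :=
    (continuous_skorokhodRegulator hf hf0).continuousAt.eventually_const_lt hcL
  have hf_near : ∀ᶠ u in 𝓝 t, u ∈ Ici 0 → -f u < c :=
    eventually_nhdsWithin_iff.mp ((hf t ht).neg.eventually_lt_const hfc)
  obtain ⟨l, r, ⟨hlt, htr⟩, hsub⟩ := mem_nhds_iff_exists_Ioo_subset.mp (hL_near.and hf_near)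
  obtain ⟨a, hla, hat⟩ := exists_between hlt
  obtain ⟨b, htb, hbr⟩ := exists_between htr
  refine ⟨a, b, ⟨hat, htb⟩, le_antisymm (monotone_skorokhodRegulator hf (hat.trans htb).le)
    (skorokhodRegulator_le_of_forall_negPart_le hf fun s hs has hsb => ?_)⟩
  have hsP := hsub ⟨hla.trans has, hsb.trans_lt hbr⟩
  have haP := hsub ⟨hla, hat.trans htr⟩
  exact max_le (by linarith [hsP.2 hs, haP.1]) (skorokhodRegulator_nonneg a)

theorem skorokhodSol_skorokhodRegulator (hf : ContinuousOn f (Ici 0))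
    (hf0 : 0 ≤ f 0) : SkorokhodSol f (skorokhodRegulator f) := by
  refine ⟨monotone_skorokhodRegulator hf, continuous_skorokhodRegulator hf hf0,
    fun t => skorokhodRegulator_of_nonpos hf0, fun t ht => ?_, ?_⟩
  · linarith [le_max_left (-f t) 0, negPart_le_skorokhodRegulator hf ht le_rfl]
  · refine measure_null_of_locally_null _ fun t ⟨ht, hX⟩ => ?_
    obtain ⟨a, b, hab, hLab⟩ := exists_mem_Ioo_skorokhodRegulator_eq hf hf0 ht hX
    refine ⟨Ioo a b, mem_nhdsWithin_of_mem_nhds (Ioo_mem_nhds hab.1 hab.2),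
      measure_mono_null Ioo_subset_Ioc_self ?_⟩
    rw [StieltjesFunction.measure_Ioc]
    simp [hLab]

theorem SkorokhodSol.eq_skorokhodRegulator_of_nonneg {l : ℝ → ℝ} (hf : ContinuousOn f (Ici 0))
    (hl : SkorokhodSol f l) {t : ℝ} (ht : 0 ≤ t) :
    l t = skorokhodRegulator f t := by
  obtain ⟨hm, hc, hz, hX, hμ⟩ := hl
  have hlt : 0 ≤ l t := hz 0 le_rfl ▸ hm ht
  refine le_antisymm ?_ (Real.iSup_le (fun s => max_le ?_ hlt) hlt)
  · refine StieltjesFunction.le_of_measure_gt_eq_zero _ hc ht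
      ((hz 0 le_rfl).trans_le (skorokhodRegulator_nonneg t)) (measure_mono_null ?_ hμ)
    rintro s ⟨⟨hs0, hst⟩, hLs⟩
    exact ⟨hs0.le, by linarith [le_max_left (-f s) 0,
      negPart_le_skorokhodRegulator hf hs0.le hst, show skorokhodRegulator f t < l s from hLs]⟩
  · linarith [hX s s.2.1, hm s.2.2]

theorem SkorokhodSol.eq_skorokhodRegulator {l : ℝ → ℝ} (hf : ContinuousOn f (Ici 0))
    (hf0 : 0 ≤ f 0) (hl : SkorokhodSol f l) : l = skorokhodRegulator f := by
  funext t
  rcases le_total 0 t with ht | ht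
  · exact hl.eq_skorokhodRegulator_of_nonneg hf ht
  · obtain ⟨-, -, hz, -⟩ := hl
    rw [hz t ht, skorokhodRegulator_of_nonpos hf0 ht]

end

/-- **Skorokhod's lemma.** Let `f : ℝ₊ → ℝ` be continuous with
`f(0) ≥ 0`. There is a unique continuous function `l` with (i) `X(t) := l(t) + f(t) ≥ 0`
for all `t ≥ 0`; (ii) `l(0) = 0` and `l` non-decreasing; (iii) `∫₀^∞ 1_{X(t)>0} dl(t) = 0`.
Moreover `l(t) = sup_{0 ≤ s ≤ t} (f(s))⁻`. -/
theorem skorokhod_lemma (f : ℝ → ℝ) (hf : ContinuousOn f (Set.Ici 0)) (hf0 : 0 ≤ f 0) :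
    (∃! l : ℝ → ℝ, SkorokhodSol f l) ∧
    ∀ l : ℝ → ℝ, SkorokhodSol f l → ∀ t : ℝ, 0 ≤ t →
      l t = ⨆ s : Set.Icc (0:ℝ) t, max (-(f s)) 0 :=
  ⟨⟨skorokhodRegulator f, skorokhodSol_skorokhodRegulator hf hf0,
      fun _ hl => hl.eq_skorokhodRegulator hf hf0⟩,
    fun _ hl _ ht => hl.eq_skorokhodRegulator_of_nonneg hf ht⟩

end
end
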